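/- On ℝ⁴ let f₁(x) = (1, x₃, x₄, 0) and define z₁(x) = 2x₂x₄ − x₃², z₂(x) = x₁x₄ − x₃, z₃(x) = x₄. Then: (a) for every x ∈ ℝ⁴ and each i ∈ {1,2,3}, Dz_i(x)(f₁(x)) = 0; and (b) for every x ∈ ℝ⁴ with x₄ ≠ 0, the three linear functionals Dz₁(x), Dz₂(x), Dz₃(x) on ℝ⁴ are linearly independent. -/

import Mathlib

/-!
Evaluated at `e₂, e₁, e₄`, the differentials of `z₁, z₂, z₃` form a triangular matrix
with diagonal `2 x₄, x₄, 1`, whose determinant `2 x₄²` is nonzero when `x₄ ≠ 0`.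
-/

/-- Control vector field `f₁(x) = (1, x₃, x₄, 0)` of Example 2. -/
noncomputable def ex2f₁ : EuclideanSpace ℝ (Fin 4) → EuclideanSpace ℝ (Fin 4) :=
  fun x => WithLp.toLp 2 ![1, x 2, x 3, 0]

/-- First integral candidate `z₁(x) = 2 x₂ x₄ - x₃²`. -/
def ex2z₁ : EuclideanSpace ℝ (Fin 4) → ℝ := fun x => 2 * x 1 * x 3 - (x 2) ^ 2

/-- First integral candidate `z₂(x) = x₁ x₄ - x₃`. -/
def ex2z₂ : EuclideanSpace ℝ (Fin 4) → ℝ := fun x => x 0 * x 3 - x 2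

/-- First integral candidate `z₃(x) = x₄`. -/
def ex2z₃ : EuclideanSpace ℝ (Fin 4) → ℝ := fun x => x 3

theorem LinearIndependent.of_det_apply_ne_zero {𝕜 E ι : Type*} [NontriviallyNormedField 𝕜]
    [NormedAddCommGroup E] [NormedSpace 𝕜 E] [Fintype ι] [DecidableEq ι]
    (φ : ι → E →L[𝕜] 𝕜) (v : ι → E) (h : (Matrix.of fun i j => φ i (v j)).det ≠ 0) :
    LinearIndependent 𝕜 φ :=
  .of_comp (LinearMap.pi fun j => (ContinuousLinearMap.apply 𝕜 𝕜 (v j)).toLinearMap)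
    (Matrix.linearIndependent_rows_of_det_ne_zero h)

section Differentials

variable (x v : EuclideanSpace ℝ (Fin 4))

theorem fderiv_ex2z₁_apply :
    fderiv ℝ ex2z₁ x v = 2 * (v 1 * x 3 + x 1 * v 3) - 2 * x 2 * v 2 := by
  have d := fun i => PiLp.hasFDerivAt_apply (𝕜 := ℝ) 2 x i
  have h : HasFDerivAt ex2z₁ _ x := (((d 1).const_mul 2).mul (d 3)).sub ((d 2).pow 2)
  rw [h.fderiv]
  simp only [Nat.add_one_sub_one, pow_one, nsmul_eq_mul, Nat.cast_ofNat, sub_apply, add_apply,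
    smul_apply, PiLp.proj_apply, smul_eq_mul]
  ring

theorem fderiv_ex2z₂_apply : fderiv ℝ ex2z₂ x v = v 0 * x 3 + x 0 * v 3 - v 2 := by
  have d := fun i => PiLp.hasFDerivAt_apply (𝕜 := ℝ) 2 x i
  have h : HasFDerivAt ex2z₂ _ x := ((d 0).mul (d 3)).sub (d 2)
  rw [h.fderiv]
  simp only [sub_apply, add_apply, smul_apply, PiLp.proj_apply, smul_eq_mul]
  ring

theorem fderiv_ex2z₃_apply : fderiv ℝ ex2z₃ x v = v 3 :=
  congrArg (· v) (PiLp.hasFDerivAt_apply (𝕜 := ℝ) 2 x 3).fderiv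

end Differentials

/-- `z₁, z₂, z₃` are first integrals of `f₁` on all of `ℝ⁴`, and at every
point with `x₄ ≠ 0` their differentials are linearly independent functionals on `ℝ⁴`. -/
theorem ex2_first_integrals :
    (∀ x : EuclideanSpace ℝ (Fin 4),
      fderiv ℝ ex2z₁ x (ex2f₁ x) = 0 ∧
      fderiv ℝ ex2z₂ x (ex2f₁ x) = 0 ∧
      fderiv ℝ ex2z₃ x (ex2f₁ x) = 0) ∧
    (∀ x : EuclideanSpace ℝ (Fin 4), x 3 ≠ 0 →
      LinearIndependent ℝ ![fderiv ℝ ex2z₁ x, fderiv ℝ ex2z₂ x, fderiv ℝ ex2z₃ x]) := by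
  refine ⟨fun x => ?_, fun x hx => ?_⟩
  · simp only [fderiv_ex2z₁_apply, fderiv_ex2z₂_apply, fderiv_ex2z₃_apply, ex2f₁,
      Matrix.cons_val_one, Matrix.cons_val_zero, Matrix.cons_val, mul_zero, add_zero, one_mul,
      sub_self, and_true]
    ring
  · refine .of_det_apply_ne_zero _ ![.single 1 1, .single 0 1, .single 3 1] ?_
    simp [Matrix.det_fin_three, fderiv_ex2z₁_apply, fderiv_ex2z₂_apply, fderiv_ex2z₃_apply, hx]
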